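/- arXiv:2005.13583 — 2 statements merged into one kernel-verified Lean document; each statement's English description precedes it below -/
import Mathlib

section
/- For all c, d ≥ 1: for each client v ∈ C, P( r_1(N(v)) ≥ 2dΔ ) ≤ e^{−dΔ/3}; consequently P( r_1 ≤ 2dΔ ) ≥ 1 − n·e^{−dΔ/3} and P( K_1 ≤ 2/c ) ≥ 1 − n·e^{−dΔ/3}. In particular, if Δ ≥ η·log²n for a constant η > 0, then r_1 ≤ 2dΔ and K_1 ≤ 2/c hold with high probability. -/
open MeasureTheory ProbabilityTheory Finset
open scoped ENNReal Classical

noncomputable section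

namespace LoadBalancing

/-- State of the ball-assignment process: for each client `v` and ball index `i`,
whether the ball is still alive (not yet accepted), and for each server a counter
(for SAER: the total number of requests received so far; for RAES: the total number
of accepted requests so far). -/
structure PState (C 𝕊 : Type*) (d : ℕ) where
  alive : C → Fin d → Prop
  total : 𝕊 → ℕ

variable {C 𝕊 Ω : Type*} [Fintype C] [Fintype 𝕊]

/-- The number of balls that server `u` receives in a round in which the set of
alive balls is `al` and the random destinations are given by `σ`. -/
def recvCount {d : ℕ} (al : C → Fin d → Prop) (σ : C → Fin d → 𝕊) (u : 𝕊) : ℕ :=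
  (Finset.univ.filter (fun p : C × Fin d => al p.1 p.2 ∧ σ p.1 p.2 = u)).card

/-- One round of SAER with threshold `τ` (= c·d): `total` counts all requests ever
received; a server is *burned* as soon as `τ ≤ total`, and a burned server rejects
all requests of the current and of all subsequent rounds; non-burned servers accept
all balls received. -/
def sStep {d : ℕ} (τ : ℝ) (σ : C → Fin d → 𝕊) (st : PState C 𝕊 d) : PState C 𝕊 d where
  alive := fun v i => st.alive v i ∧
    τ ≤ ((st.total (σ v i) + recvCount st.alive σ (σ v i) : ℕ) : ℝ)
  total := fun u => st.total u + recvCount st.alive σ u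

/-- The SAER state after `t` rounds, where the (random) destination choices of
round `s ≥ 1` are given by `σ s`.  Initially all `d` balls of every client are alive. -/
def sState {d : ℕ} (τ : ℝ) (σ : ℕ → C → Fin d → 𝕊) : ℕ → PState C 𝕊 d
  | 0 => ⟨fun _ _ => True, fun _ => 0⟩
  | t + 1 => sStep τ (σ (t + 1)) (sState τ σ t)

/-- One round of RAES with threshold `τ` (= c·d): `total` counts the accepted
requests; a server accepts all balls received in the current round unless doing so
would make its number of accepted balls exceed `τ`, in which case it is *saturated*
and rejects all balls received in the current round (but may accept again later). -/
def rStep {d : ℕ} (τ : ℝ) (σ : C → Fin d → 𝕊) (st : PState C 𝕊 d) : PState C 𝕊 d where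
  alive := fun v i => st.alive v i ∧
    τ < ((st.total (σ v i) + recvCount st.alive σ (σ v i) : ℕ) : ℝ)
  total := fun u =>
    if τ < ((st.total u + recvCount st.alive σ u : ℕ) : ℝ) then st.total u
    else st.total u + recvCount st.alive σ u

/-- The RAES state after `t` rounds. -/
def rState {d : ℕ} (τ : ℝ) (σ : ℕ → C → Fin d → 𝕊) : ℕ → PState C 𝕊 d
  | 0 => ⟨fun _ _ => True, fun _ => 0⟩
  | t + 1 => rStep τ (σ (t + 1)) (rState τ σ t)

/-- The destination choices determined by a sample point `ω`. -/
def env {d : ℕ} (choice : ℕ → C → Fin d → Ω → 𝕊) (ω : Ω) : ℕ → C → Fin d → 𝕊 :=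
  fun t v i => choice t v i ω

/-- `a_t^{(i)}(v)`: the `i`-th ball of client `v` is still alive at the beginning of
round `t` (`t ≥ 1`) of SAER. -/
def aliveAt {d : ℕ} (τ : ℝ) (choice : ℕ → C → Fin d → Ω → 𝕊) (t : ℕ) (v : C) (i : Fin d)
    (ω : Ω) : Prop :=
  (sState τ (env choice ω) (t - 1)).alive v i

/-- `r_t(u)`: the number of balls that server `u` receives at round `t` of SAER. -/
def recvAt {d : ℕ} (τ : ℝ) (choice : ℕ → C → Fin d → Ω → 𝕊) (t : ℕ) (u : 𝕊) (ω : Ω) : ℕ :=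
  recvCount (sState τ (env choice ω) (t - 1)).alive (env choice ω t) u

/-- `r_t(N(v))`: the number of balls received at round `t` by the neighbourhood of `v`. -/
def recvNbhd {d : ℕ} (τ : ℝ) (Nb : C → Finset 𝕊) (choice : ℕ → C → Fin d → Ω → 𝕊)
    (t : ℕ) (v : C) (ω : Ω) : ℕ :=
  ∑ u ∈ Nb v, recvAt τ choice t u ω

/-- Server `u` is burned at round `t`: it has received at least `τ = c·d` balls
during rounds `1, …, t`. -/
def burnedAt {d : ℕ} (τ : ℝ) (choice : ℕ → C → Fin d → Ω → 𝕊) (t : ℕ) (u : 𝕊) (ω : Ω) :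
    Prop :=
  τ ≤ ((sState τ (env choice ω) t).total u : ℝ)

/-- `S_t(v)`: the fraction of burned servers in the neighbourhood of `v` at round `t`. -/
def fracBurned {d : ℕ} (τ : ℝ) (Nb : C → Finset 𝕊) (choice : ℕ → C → Fin d → Ω → 𝕊)
    (t : ℕ) (v : C) (ω : Ω) : ℝ :=
  ((Nb v).filter (fun u => burnedAt τ choice t u ω)).card / (Nb v).card

/-- `K_t(v) = (1/(c·d·Δ_v)) · Σ_{s=1}^t r_s(N(v))`. -/
def Kval {d : ℕ} (c : ℝ) (Nb : C → Finset 𝕊) (choice : ℕ → C → Fin d → Ω → 𝕊)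
    (t : ℕ) (v : C) (ω : Ω) : ℝ :=
  (∑ s ∈ Finset.Icc 1 t, (recvNbhd (c * d) Nb choice s v ω : ℝ)) / (c * d * (Nb v).card)

/-- The number of balls alive at the beginning of round `t + 1` (after `t` rounds
of SAER). -/
def aliveNum {d : ℕ} (τ : ℝ) (choice : ℕ → C → Fin d → Ω → 𝕊) (t : ℕ) (ω : Ω) : ℕ :=
  (Finset.univ.filter (fun p : C × Fin d => (sState τ (env choice ω) t).alive p.1 p.2)).card

/-- The work of SAER: every alive ball produces one request message and one answer
message in each round, hence the total number of exchanged messages is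
`2 · Σ_t (number of balls alive at the beginning of round t)`. -/
def workOf {d : ℕ} (τ : ℝ) (choice : ℕ → C → Fin d → Ω → 𝕊) (ω : Ω) : ℝ≥0∞ :=
  2 * ∑' t : ℕ, (aliveNum τ choice t ω : ℝ≥0∞)

/-- The number of balls alive after `t` rounds of RAES. -/
def aliveNumR {d : ℕ} (τ : ℝ) (choice : ℕ → C → Fin d → Ω → 𝕊) (t : ℕ) (ω : Ω) : ℕ :=
  (Finset.univ.filter (fun p : C × Fin d => (rState τ (env choice ω) t).alive p.1 p.2)).card

/-- The work of RAES. -/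
def workOfR {d : ℕ} (τ : ℝ) (choice : ℕ → C → Fin d → Ω → 𝕊) (ω : Ω) : ℝ≥0∞ :=
  2 * ∑' t : ℕ, (aliveNumR τ choice t ω : ℝ≥0∞)

/-- The random environment of the protocol: for every round `t`, client `v` and ball
index `i`, the destination `choice t v i` is uniform on the neighbourhood `Nb v`, and
all these choices (over all rounds, clients and ball indices) are mutually independent. -/
def UnifIndep {d : ℕ} [MeasurableSpace Ω] (P : Measure Ω) (Nb : C → Finset 𝕊)
    (choice : ℕ → C → Fin d → Ω → 𝕊) : Prop :=
  (∀ t v i u, P {ω | choice t v i ω = u}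
      = if u ∈ Nb v then ((Nb v).card : ℝ≥0∞)⁻¹ else 0) ∧
  iIndepFun (m := fun _ : ℕ × C × Fin d => (⊤ : MeasurableSpace 𝕊))
    (fun (p : ℕ × C × Fin d) ω => choice p.1 p.2.1 p.2.2 ω) P

/-- The degree of a server `u`: the number of clients having `u` in their neighbourhood. -/
def serverDeg (Nb : C → Finset 𝕊) (u : 𝕊) : ℕ :=
  (Finset.univ.filter (fun v => u ∈ Nb v)).card

/-- The bipartite graph given by the neighbourhoods `Nb` is `Δ`-regular. -/
def Regular (Nb : C → Finset 𝕊) (Δ : ℕ) : Prop :=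
  (∀ v, (Nb v).card = Δ) ∧ (∀ u, serverDeg Nb u = Δ)

end LoadBalancing

/-! In round 1 every ball is alive, so `r₁(N(v))` counts the balls whose independent uniform
destination lands in `N(v)`; ball `(w, i)` does so with probability `|N(w) ∩ N(v)|/Δ`, and double
counting in the `Δ`-regular graph makes the mean `dΔ`. The exponential moment bound
`P(X ≥ 2dΔ) ≤ 2^(-2dΔ) 𝔼[2^X] ≤ (e/4)^(dΔ) ≤ e^(-dΔ/3)` gives the tail; a union bound over the
clients and `K₁(v) = r₁(N(v))/(cdΔ)` give the rest. When `Δ ≥ η log² n` and `log n ≥ 6/η`, the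
failure probability `n e^(-dΔ/3)` is at most `1/n`. -/

namespace ProbabilityTheory

variable {Ω ι α : Type*} [MeasurableSpace Ω] {P : Measure Ω}

lemma iIndepFun.measure_forall_eq [Fintype ι] {X : ι → Ω → α}
    (hX : iIndepFun (m := fun _ => (⊤ : MeasurableSpace α)) X P) (g : ι → α) :
    P {ω | ∀ i, X i ω = g i} = ∏ i, P {ω | X i ω = g i} := by
  have := hX.meas_iInter (s := fun i => {ω | X i ω = g i}) fun i => ⟨{g i}, trivial, rfl⟩
  rwa [← Set.ofPred_forall] at this

/-- `P(k ≤ N) ≤ 2⁻ᵏ 𝔼[2ᴺ]` for the number `N` of coordinates falling into `S`. Only the product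
formula for point events and subadditivity are used, so `X` need not be measurable. -/
lemma iIndepFun.measure_le_card_mem_le [Fintype ι] [Fintype α] {X : ι → Ω → α}
    (hX : iIndepFun (m := fun _ => (⊤ : MeasurableSpace α)) X P) (S : Finset α) (k : ℕ) :
    P {ω | k ≤ #{i | X i ω ∈ S}} ≤
      (2 ^ k)⁻¹ * ∏ i, ∑ a, P {ω | X i ω = a} * (if a ∈ S then 2 else 1) := by
  let A : Finset (ι → α) := {g | k ≤ #{i | g i ∈ S}}
  have hcover : {ω | k ≤ #{i | X i ω ∈ S}} ⊆ ⋃ g ∈ A, {ω | ∀ i, X i ω = g i} := fun ω hω =>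
    Set.mem_iUnion₂.mpr ⟨fun i => X i ω, by simpa [A] using hω, fun _ => rfl⟩
  have htilt : ∀ g ∈ A, P {ω | ∀ i, X i ω = g i} ≤
      (2 ^ k)⁻¹ * ∏ i, P {ω | X i ω = g i} * (if g i ∈ S then 2 else 1) := by
    intro g hg
    have hk : (2 : ℝ≥0∞) ^ k ≤ ∏ i, (if g i ∈ S then 2 else 1) := by
      rw [Finset.prod_ite, Finset.prod_const_one, mul_one, Finset.prod_const]
      exact pow_le_pow_right₀ one_le_two (by simpa [A] using hg)
    have h2k : (2 : ℝ≥0∞) ^ k * (2 ^ k)⁻¹ = 1 :=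
      ENNReal.mul_inv_cancel (by positivity) (ENNReal.pow_ne_top ENNReal.ofNat_ne_top)
    calc P {ω | ∀ i, X i ω = g i} = P {ω | ∀ i, X i ω = g i} * (2 ^ k * (2 ^ k)⁻¹) := by
          rw [h2k, mul_one]
      _ ≤ P {ω | ∀ i, X i ω = g i} * ((∏ i, if g i ∈ S then 2 else 1) * (2 ^ k)⁻¹) := by
          gcongr
      _ = _ := by rw [Finset.prod_mul_distrib, ← hX.measure_forall_eq]; ring
  calc P {ω | k ≤ #{i | X i ω ∈ S}}
      ≤ ∑ g ∈ A, P {ω | ∀ i, X i ω = g i} :=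
        (measure_mono hcover).trans (measure_biUnion_finset_le _ _)
    _ ≤ ∑ g : ι → α, (2 ^ k)⁻¹ * ∏ i, P {ω | X i ω = g i} * (if g i ∈ S then 2 else 1) :=
        (Finset.sum_le_sum htilt).trans (Finset.sum_le_sum_of_subset (Finset.subset_univ _))
    _ = (2 ^ k)⁻¹ * ∏ i, ∑ a, P {ω | X i ω = a} * (if a ∈ S then 2 else 1) := by
        rw [← Finset.mul_sum, Finset.prod_univ_sum, Fintype.piFinset_univ]

end ProbabilityTheory

lemma Finset.sum_uniform_mul_ite_two_le {α : Type*} [Fintype α] (T S : Finset α) :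
    ∑ a, (if a ∈ T then (#T : ℝ≥0∞)⁻¹ else 0) * (if a ∈ S then 2 else 1) ≤
      ENNReal.ofReal (Real.exp (#(T ∩ S) / #T)) := by
  rcases T.eq_empty_or_nonempty with rfl | hT
  · simp
  have hT0 : (0 : ℝ) < #T := by exact_mod_cast hT.card_pos
  have hsum : ∑ a, (if a ∈ T then (#T : ℝ≥0∞)⁻¹ else 0) * (if a ∈ S then 2 else 1) =
      ENNReal.ofReal (1 + #(T ∩ S) / #T) := by
    have hsplit : ∀ a, (if a ∈ T then (#T : ℝ≥0∞)⁻¹ else 0) * (if a ∈ S then 2 else 1) =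
        (if a ∈ T then (#T : ℝ≥0∞)⁻¹ else 0) + (if a ∈ T ∩ S then (#T : ℝ≥0∞)⁻¹ else 0) := by
      intro a
      by_cases ha : a ∈ T <;> by_cases hs : a ∈ S <;> simp [ha, hs, mul_two]
    rw [Finset.sum_congr rfl fun a _ => hsplit a, Finset.sum_add_distrib, Finset.sum_ite_mem,
      Finset.sum_ite_mem, Finset.univ_inter, Finset.univ_inter, Finset.sum_const,
      Finset.sum_const, nsmul_eq_mul, nsmul_eq_mul,
      ENNReal.mul_inv_cancel (by exact_mod_cast hT.card_pos.ne') (ENNReal.natCast_ne_top _),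
      ENNReal.ofReal_add zero_le_one (by positivity), ENNReal.ofReal_one,
      ENNReal.ofReal_div_of_pos hT0, ENNReal.ofReal_natCast, ENNReal.ofReal_natCast,
      div_eq_mul_inv]
  rw [hsum]
  exact ENNReal.ofReal_le_ofReal (by linarith [Real.add_one_le_exp ((#(T ∩ S) : ℝ) / #T)])

namespace Real

lemma inv_four_pow_mul_exp_le (m : ℕ) :
    ((4 : ℝ) ^ m)⁻¹ * exp m ≤ exp (-m / 3) := by
  have hlog4 : (4 / 3 : ℝ) ≤ log 4 := by
    rw [show (4 : ℝ) = 2 ^ 2 by norm_num, log_pow]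
    linarith [log_two_gt_d9]
  rw [← rpow_natCast, ← exp_log (by norm_num : (0 : ℝ) < 4), ← exp_mul,
    ← exp_neg, ← exp_add, exp_le_exp]
  nlinarith [(Nat.cast_nonneg m : (0 : ℝ) ≤ m)]

lemma mul_exp_neg_div_three_le_inv {η x m : ℝ} (hη : 0 < η) (hx : exp (6 / η) ≤ x)
    (hm : η * log x ^ 2 ≤ m) : x * exp (-m / 3) ≤ x⁻¹ := by
  have hx0 : 0 < x := (exp_pos _).trans_le hx
  have hlog : 6 ≤ η * log x := by
    rw [← div_le_iff₀' hη]
    exact (le_log_iff_exp_le hx0).mpr hx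
  have hlog0 : 0 ≤ log x := by nlinarith
  rw [← exp_log hx0, ← exp_neg, ← exp_add, exp_le_exp]
  nlinarith

end Real

namespace MeasureTheory

lemma one_sub_card_mul_le_measure_forall {Ω ι : Type*} [MeasurableSpace Ω] [Fintype ι]
    (P : Measure Ω) [IsProbabilityMeasure P] {p : ι → Ω → Prop} {ε : ℝ≥0∞}
    (h : ∀ i, P {ω | ¬ p i ω} ≤ ε) :
    1 - Fintype.card ι * ε ≤ P {ω | ∀ i, p i ω} := by
  rw [tsub_le_iff_right]
  calc (1 : ℝ≥0∞) = P ({ω | ∀ i, p i ω} ∪ ⋃ i, {ω | ¬ p i ω}) := by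
        rw [← measure_univ (μ := P)]
        congr 1
        ext ω
        simpa using forall_or_exists_not (p · ω)
    _ ≤ P {ω | ∀ i, p i ω} + ∑ i, P {ω | ¬ p i ω} :=
        (measure_union_le _ _).trans (add_le_add_right (measure_iUnion_fintype_le _ _) _)
    _ ≤ P {ω | ∀ i, p i ω} + Fintype.card ι * ε := by
        grw [Finset.sum_le_sum fun i _ => h i, Finset.sum_const, Finset.card_univ, nsmul_eq_mul]

end MeasureTheory

namespace LoadBalancing

variable {C 𝕊 Ω : Type*} [Fintype C]

lemma recvNbhd_one_eq_card {d : ℕ} (τ : ℝ) (Nb : C → Finset 𝕊)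
    (choice : ℕ → C → Fin d → Ω → 𝕊) (v : C) (ω : Ω) :
    recvNbhd τ Nb choice 1 v ω = #{p : C × Fin d | choice 1 p.1 p.2 ω ∈ Nb v} := by
  rw [card_eq_sum_card_fiberwise (s := {p : C × Fin d | choice 1 p.1 p.2 ω ∈ Nb v})
    (f := fun p => choice 1 p.1 p.2 ω) fun p hp => (mem_filter.mp hp).2]
  refine sum_congr rfl fun u hu => congrArg card (ext fun p => ?_)
  simp only [sState, env, Nat.sub_self, mem_filter, mem_univ, true_and]
  exact ⟨fun h => ⟨h ▸ hu, h⟩, And.right⟩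

lemma sum_card_inter_eq_of_regular {Nb : C → Finset 𝕊} {Δ : ℕ} (hreg : Regular Nb Δ) (v : C) :
    ∑ w, #(Nb w ∩ Nb v) = Δ * Δ := by
  have := sum_card_bipartiteAbove_eq_sum_card_bipartiteBelow (s := univ) (t := Nb v)
    (r := fun w u => u ∈ Nb w)
  simp only [bipartiteAbove, bipartiteBelow, filter_mem_eq_inter] at this
  simp_rw [inter_comm _ (Nb v), this]
  exact (sum_const_nat fun u _ => hreg.2 u).trans (by rw [hreg.1 v])

lemma sum_card_inter_div_card_eq_of_regular {d : ℕ} {Nb : C → Finset 𝕊} {Δ : ℕ}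
    (hreg : Regular Nb Δ) (hΔ : Δ ≠ 0) (v : C) :
    ∑ p : C × Fin d, (#(Nb p.1 ∩ Nb v) / #(Nb p.1) : ℝ) = (d * Δ : ℕ) := by
  simp only [hreg.1, ← sum_div, Fintype.sum_prod_type, sum_const, card_univ, Fintype.card_fin,
    nsmul_eq_mul, ← mul_sum]
  rw [← Nat.cast_sum, sum_card_inter_eq_of_regular hreg v]
  field_simp
  push_cast
  ring

theorem measure_le_recvNbhd_one_le [Fintype 𝕊] {d : ℕ} [MeasurableSpace Ω]
    (P : Measure Ω) [IsProbabilityMeasure P] {Nb : C → Finset 𝕊} {Δ : ℕ} (hreg : Regular Nb Δ)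
    {choice : ℕ → C → Fin d → Ω → 𝕊} (h : UnifIndep P Nb choice) (τ : ℝ) (v : C) :
    P {ω | 2 * d * Δ ≤ recvNbhd τ Nb choice 1 v ω} ≤
      ENNReal.ofReal (Real.exp (-((d * Δ : ℕ) : ℝ) / 3)) := by
  rcases eq_or_ne Δ 0 with rfl | hΔ
  · simp
  have hround : iIndepFun (m := fun _ => (⊤ : MeasurableSpace 𝕊))
      (fun (p : C × Fin d) ω => choice 1 p.1 p.2 ω) P :=
    h.2.precomp (g := fun p => (1, p)) fun p q hpq => (Prod.mk.inj hpq).2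
  have hfactor : ∀ p : C × Fin d,
      ∑ u, P {ω | choice 1 p.1 p.2 ω = u} * (if u ∈ Nb v then 2 else 1) ≤
        ENNReal.ofReal (Real.exp (#(Nb p.1 ∩ Nb v) / #(Nb p.1))) := fun p => by
    simpa only [h.1] using sum_uniform_mul_ite_two_le (Nb p.1) (Nb v)
  have hprod : ∏ p : C × Fin d, ENNReal.ofReal (Real.exp (#(Nb p.1 ∩ Nb v) / #(Nb p.1))) =
      ENNReal.ofReal (Real.exp (d * Δ : ℕ)) := by
    rw [← ENNReal.ofReal_prod_of_nonneg fun _ _ => (Real.exp_pos _).le, ← Real.exp_sum,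
      sum_card_inter_div_card_eq_of_regular hreg hΔ v]
  have hfinal : ((2 : ℝ≥0∞) ^ (2 * d * Δ))⁻¹ * ENNReal.ofReal (Real.exp (d * Δ : ℕ)) ≤
      ENNReal.ofReal (Real.exp (-((d * Δ : ℕ) : ℝ) / 3)) := by
    rw [mul_assoc, pow_mul, show (2 : ℝ≥0∞) ^ 2 = ENNReal.ofReal 4 by norm_num,
      ← ENNReal.ofReal_pow (by norm_num), ← ENNReal.ofReal_inv_of_pos (by positivity),
      ← ENNReal.ofReal_mul (by positivity)]
    exact ENNReal.ofReal_le_ofReal (Real.inv_four_pow_mul_exp_le _)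
  simp_rw [recvNbhd_one_eq_card]
  calc _ ≤ _ := hround.measure_le_card_mem_le (Nb v) (2 * d * Δ)
    _ ≤ _ := by grw [prod_le_prod' fun p _ => hfactor p, hprod]
    _ ≤ _ := hfinal

lemma Kval_one_le {d : ℕ} {c : ℝ} (hc : 0 < c) {Nb : C → Finset 𝕊} {Δ : ℕ}
    {choice : ℕ → C → Fin d → Ω → 𝕊} {v : C} {ω : Ω} (hcard : #(Nb v) = Δ)
    (hr : recvNbhd (c * d) Nb choice 1 v ω ≤ 2 * d * Δ) :
    Kval c Nb choice 1 v ω ≤ 2 / c := by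
  rw [Kval, Icc_self, sum_singleton, hcard]
  have hr' : (recvNbhd (c * d) Nb choice 1 v ω : ℝ) ≤ 2 * d * Δ := by exact_mod_cast hr
  rcases (by positivity : (0 : ℝ) ≤ d * Δ).eq_or_lt with h0 | hpos
  · rw [mul_assoc, ← h0, mul_zero, div_zero]
    positivity
  · rw [div_le_div_iff₀ (by rw [mul_assoc]; exact mul_pos hc hpos) hc]
    nlinarith

theorem one_sub_card_mul_le_measure_forall_recvNbhd_one_le [Fintype 𝕊] {d : ℕ}
    [MeasurableSpace Ω] (P : Measure Ω) [IsProbabilityMeasure P] {Nb : C → Finset 𝕊} {Δ : ℕ}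
    (hreg : Regular Nb Δ) {choice : ℕ → C → Fin d → Ω → 𝕊} (h : UnifIndep P Nb choice)
    (τ : ℝ) :
    1 - Fintype.card C * ENNReal.ofReal (Real.exp (-((d * Δ : ℕ) : ℝ) / 3)) ≤
      P {ω | ∀ v, recvNbhd τ Nb choice 1 v ω ≤ 2 * d * Δ} :=
  one_sub_card_mul_le_measure_forall P fun v =>
    (measure_mono fun _ hω => le_of_lt (not_le.mp hω)).trans
      (measure_le_recvNbhd_one_le P hreg h τ v)

/-- Lemma 8, first round, regular case. For all `c, d ≥ 1` and each
client `v`, `P(r_1(N(v)) ≥ 2dΔ) ≤ e^{−dΔ/3}`; consequently `P(r_1 ≤ 2dΔ) ≥ 1 − n·e^{−dΔ/3}`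
and `P(K_1 ≤ 2/c) ≥ 1 − n·e^{−dΔ/3}`.  In particular, if `Δ ≥ η log² n` for a constant
`η > 0`, then `r_1 ≤ 2dΔ` and `K_1 ≤ 2/c` hold with high probability. -/
theorem saer_first_round_regular :
    (∀ (n : ℕ) (C 𝕊 : Type) [Fintype C] [Fintype 𝕊],
      Fintype.card C = n → Fintype.card 𝕊 = n →
      ∀ (Nb : C → Finset 𝕊) (Δ : ℕ), Regular Nb Δ →
      ∀ (d : ℕ), 1 ≤ d → ∀ (c : ℝ), 1 ≤ c →
      ∀ (Ω : Type) [MeasurableSpace Ω] (P : Measure Ω) [IsProbabilityMeasure P]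
        (choice : ℕ → C → Fin d → Ω → 𝕊), UnifIndep P Nb choice →
        (∀ v : C, P {ω | 2 * d * Δ ≤ recvNbhd (c * d) Nb choice 1 v ω}
            ≤ ENNReal.ofReal (Real.exp (-((d * Δ : ℕ) : ℝ) / 3))) ∧
        1 - n * ENNReal.ofReal (Real.exp (-((d * Δ : ℕ) : ℝ) / 3)) ≤
            P {ω | ∀ v : C, recvNbhd (c * d) Nb choice 1 v ω ≤ 2 * d * Δ} ∧
        1 - n * ENNReal.ofReal (Real.exp (-((d * Δ : ℕ) : ℝ) / 3)) ≤
            P {ω | ∀ v : C, Kval c Nb choice 1 v ω ≤ 2 / c}) ∧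
    (∀ η : ℝ, 0 < η → ∀ (d : ℕ), 1 ≤ d → ∀ (c : ℝ), 1 ≤ c →
      ∃ γ : ℝ, 0 < γ ∧ ∃ N : ℕ, ∀ n : ℕ, N ≤ n →
      ∀ (C 𝕊 : Type) [Fintype C] [Fintype 𝕊],
        Fintype.card C = n → Fintype.card 𝕊 = n →
        ∀ (Nb : C → Finset 𝕊) (Δ : ℕ), Regular Nb Δ → η * Real.log n ^ 2 ≤ (Δ : ℝ) →
        ∀ (Ω : Type) [MeasurableSpace Ω] (P : Measure Ω) [IsProbabilityMeasure P]
          (choice : ℕ → C → Fin d → Ω → 𝕊), UnifIndep P Nb choice →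
          1 - ENNReal.ofReal ((n : ℝ) ^ (-γ)) ≤
            P {ω | (∀ v : C, recvNbhd (c * d) Nb choice 1 v ω ≤ 2 * d * Δ) ∧
                   (∀ v : C, Kval c Nb choice 1 v ω ≤ 2 / c)}) := by
  refine ⟨fun n C 𝕊 _ _ hC _ Nb Δ hreg d _ c hc Ω _ P _ choice h => ?_,
    fun η hη d hd c hc => ⟨1, one_pos, ⌈Real.exp (6 / η)⌉₊,
      fun n hn C 𝕊 _ _ hC _ Nb Δ hreg hΔ Ω _ P _ choice h => ?_⟩⟩
  · have hall := one_sub_card_mul_le_measure_forall_recvNbhd_one_le P hreg h (c * d)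
    rw [hC] at hall
    exact ⟨measure_le_recvNbhd_one_le P hreg h _, hall,
      hall.trans (measure_mono fun ω hω v => Kval_one_le (by linarith) (hreg.1 v) (hω v))⟩
  · have hall := one_sub_card_mul_le_measure_forall_recvNbhd_one_le P hreg h (c * d)
    rw [hC] at hall
    have hdΔ : η * Real.log n ^ 2 ≤ ((d * Δ : ℕ) : ℝ) := by
      have : (Δ : ℝ) ≤ d * Δ := le_mul_of_one_le_left (by positivity) (by exact_mod_cast hd)
      push_cast
      linarith
    have hsmall : (n : ℝ≥0∞) * ENNReal.ofReal (Real.exp (-((d * Δ : ℕ) : ℝ) / 3)) ≤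
        ENNReal.ofReal ((n : ℝ) ^ (-1 : ℝ)) := by
      rw [← ENNReal.ofReal_natCast, ← ENNReal.ofReal_mul (Nat.cast_nonneg n), Real.rpow_neg_one]
      exact ENNReal.ofReal_le_ofReal
        (Real.mul_exp_neg_div_three_le_inv hη (Nat.ceil_le.mp hn) hdΔ)
    exact (tsub_le_tsub_left hsmall 1).trans (hall.trans (measure_mono fun ω hω =>
      ⟨hω, fun v => Kval_one_le (by linarith) (hreg.1 v) (hω v)⟩))

end LoadBalancing
end
end

section
/- Let c > 1 and let {γ_t}_{t≥0} be defined by γ_0 = 1 and γ_t = (2/c)·Σ_{i=1}^{t} ∏_{j=0}^{i−1} γ_j for t ≥ 1. If α ≥ 2 satisfies 2/c ≤ 1/α², then for every t ≥ 1 it holds that γ_t ≤ 1/α − 1/α^{t+1}. -/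
/-- For `c > 1`, let `{γ_t}` be defined by `γ_0 = 1` and
`γ_t = (2/c)·Σ_{i=1}^{t} ∏_{j=0}^{i−1} γ_j` for `t ≥ 1`.  If `α ≥ 2` satisfies
`2/c ≤ 1/α²`, then for every `t ≥ 1` it holds that `γ_t ≤ 1/α − 1/α^{t+1}`. -/
theorem gamma_sequence_explicit_bound (c : ℝ) (hc : 1 < c) (γ : ℕ → ℝ)
    (hγ0 : γ 0 = 1)
    (hγ : ∀ t : ℕ, 1 ≤ t →
      γ t = (2 / c) * ∑ i ∈ Finset.Icc 1 t, ∏ j ∈ Finset.range i, γ j)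
    (α : ℝ) (hα : 2 ≤ α) (hαc : 2 / c ≤ 1 / α ^ 2) :
    ∀ t : ℕ, 1 ≤ t → γ t ≤ 1 / α - 1 / α ^ (t + 1) := by
  have hc0 : (0:ℝ) < c := lt_trans one_pos hc
  have h2c : (0:ℝ) < 2 / c := by positivity
  have hα0 : (0:ℝ) < α := lt_of_lt_of_le two_pos hα
  have hpos : ∀ t, 0 < γ t := by
    intro t
    induction t using Nat.strong_induction_on with
    | _ t ih =>
      rcases Nat.eq_zero_or_pos t with h | h
      · simp [h, hγ0]
      · rw [hγ t h]
        apply mul_pos h2c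
        apply Finset.sum_pos
        · intro i hi
          apply Finset.prod_pos
          intro j hj
          exact ih j (lt_of_lt_of_le (Finset.mem_range.mp hj) (Finset.mem_Icc.mp hi).2)
        · exact Finset.nonempty_Icc.mpr h
  have hbase : γ 1 = 2 / c := by
    rw [hγ 1 le_rfl]
    simp [hγ0]
  intro t
  induction t using Nat.strong_induction_on with
  | _ t ih =>
    intro ht
    match t, ht with
    | 1, _ =>
      rw [hbase]
      have h1 : 1 / α ^ 2 ≤ 1 / α - 1 / α ^ (1 + 1) := by
        rw [show (1:ℕ) + 1 = 2 from rfl]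
        have he : 1 / α - 1 / α ^ 2 = (α - 1) / α ^ 2 := by
          field_simp
        rw [he]
        gcongr
        linarith
      linarith
    | (s + 2), _ =>
      have hs1 : 1 ≤ s + 1 := Nat.le_add_left 1 s
      -- recurrence: γ (s+2) = γ (s+1) + (2/c) * ∏_{j ∈ range (s+2)} γ j
      have hrec : γ (s + 2) = γ (s + 1) + (2 / c) * ∏ j ∈ Finset.range (s + 2), γ j := by
        rw [hγ (s + 2) (by omega), hγ (s + 1) hs1]
        rw [show s + 2 = (s + 1) + 1 from rfl,
          Finset.sum_Icc_succ_top (by omega : 1 ≤ s + 1 + 1)]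
        ring
      -- bound the product
      have hprodle : ∏ j ∈ Finset.range (s + 2), γ j ≤ (1 / α) ^ (s + 1) := by
        rw [Finset.prod_range_succ' (fun j => γ j) (s + 1), hγ0, mul_one]
        calc ∏ j ∈ Finset.range (s + 1), γ (j + 1)
            ≤ ∏ j ∈ Finset.range (s + 1), (1 / α) := by
              apply Finset.prod_le_prod
              · intro j _; exact le_of_lt (hpos (j + 1))
              · intro j hj
                have hjlt := Finset.mem_range.mp hj
                have hj1 : 1 ≤ j + 1 := Nat.le_add_left 1 j
                have := ih (j + 1) (by omega) hj1
                have hpow : (0:ℝ) < 1 / α ^ (j + 1 + 1) := by positivity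
                linarith
          _ = (1 / α) ^ (s + 1) := by rw [Finset.prod_const, Finset.card_range]
      have hIH := ih (s + 1) (by omega) hs1
      have hprodpos : 0 < ∏ j ∈ Finset.range (s + 2), γ j :=
        Finset.prod_pos (fun j _ => hpos j)
      have hstep : (2 / c) * ∏ j ∈ Finset.range (s + 2), γ j ≤ 1 / α ^ (s + 3) := by
        calc (2 / c) * ∏ j ∈ Finset.range (s + 2), γ j
            ≤ (1 / α ^ 2) * (1 / α) ^ (s + 1) := by
              apply mul_le_mul hαc hprodle (le_of_lt hprodpos) (by positivity)
          _ = 1 / α ^ (s + 3) := by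
              rw [div_pow, one_pow, div_mul_div_comm, one_mul, ← pow_add,
                show 2 + (s + 1) = s + 3 from by omega]
      have hkey : 1 / α ^ (s + 1 + 1) - 1 / α ^ (s + 3) ≥ 1 / α ^ (s + 2 + 1) := by
        have h1 : 1 / α ^ (s + 3) = (1 / α) * (1 / α ^ (s + 2)) := by
          rw [div_mul_div_comm, one_mul, ← pow_succ']
        have h2 : (0:ℝ) < 1 / α ^ (s + 2) := by positivity
        have h3 : 1 / α ≤ 1 / 2 := by
          apply one_div_le_one_div_of_le two_pos hα
        have : 1 / α ^ (s + 3) ≤ (1 / 2) * (1 / α ^ (s + 2)) := by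
          rw [h1]
          exact mul_le_mul_of_nonneg_right h3 (le_of_lt h2)
        have h4 : s + 1 + 1 = s + 2 := rfl
        have h5 : s + 2 + 1 = s + 3 := rfl
        rw [h4, h5]
        linarith
      calc γ (s + 2) = γ (s + 1) + (2 / c) * ∏ j ∈ Finset.range (s + 2), γ j := hrec
        _ ≤ (1 / α - 1 / α ^ (s + 1 + 1)) + 1 / α ^ (s + 3) := by linarith
        _ ≤ 1 / α - 1 / α ^ (s + 2 + 1) := by linarith
end
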